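/- arXiv:0912.5018 — 5 statements merged into one kernel-verified Lean document; each statement's English description precedes it below -/
import Mathlib

section
/- Given two C^2-smooth functions f, g : ℝ → ℝ and T > 0, there exists a C^2-smooth function y : [0,T] × ℝ → ℝ satisfying the one-dimensional wave equation y_tt - y_xx = 0 on [0,T] × ℝ, with y(0,x) = f(x) and y(T,x) = g(x) for all x ∈ ℝ. -/
/-!
Take `y` of d'Alembert form `y t x = F (x + t) + G (x - t)`. Writing `F = f / 2 + W` and
`G = f / 2 - W` takes care of `y 0 = f`, and `y T = g` becomes the difference equation
`W (u + p) - W u = K u` with `p = 2T` and `K u = g (u + T) - (f (u + 2T) + f u) / 2`. A `C²`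
solution of it is the telescoping series `∑_{k ≥ 1} K (u - k p)` with its terms switched on and
off by a smooth transition function, so that only finitely many are nonzero near each point.
-/

open Real Set

noncomputable section

/-- The coefficient `smoothTransition (u / p - n) - [n < 0]` satisfies
`c n (u + p) = c (n - 1) u + [n = 0]` and vanishes unless `n` lies between `0` and `u / p`. -/
def differenceSolutionTerm (K : ℝ → ℝ) (p : ℝ) (n : ℤ) (u : ℝ) : ℝ :=
  (smoothTransition (u / p - n) - if n < 0 then 1 else 0) * K (u - p * (n + 1))

def differenceSolution (K : ℝ → ℝ) (p u : ℝ) : ℝ :=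
  ∑ᶠ n : ℤ, differenceSolutionTerm K p n u

end

section DifferenceEquation

variable {K : ℝ → ℝ} {p : ℝ}

theorem differenceSolutionTerm_add_period (hp : p ≠ 0) (n : ℤ) (u : ℝ) :
    differenceSolutionTerm K p n (u + p) =
      differenceSolutionTerm K p (n - 1) u + if n = 0 then K u else 0 := by
  have hcoeff : (u + p) / p - n = u / p - ((n - 1 : ℤ) : ℝ) := by
    push_cast; field_simp; ring
  have harg : u + p - p * (n + 1) = u - p * (((n - 1 : ℤ) : ℝ) + 1) := by push_cast; ring
  rw [differenceSolutionTerm, differenceSolutionTerm, hcoeff, harg]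
  rcases lt_trichotomy n 0 with hn | rfl | hn
  · simp [hn, hn.ne, show n - 1 < 0 by omega]
  · simp only [Int.cast_neg, Int.cast_one, zero_sub, sub_neg_eq_add, sub_zero,
      neg_add_cancel, mul_zero, lt_self_iff_false, ↓reduceIte, Int.reduceNeg, Int.neg_neg_iff_pos,
      zero_lt_one]
    ring
  · simp [hn.ne', not_lt.2 hn.le, show ¬ n - 1 < 0 by omega]

theorem abs_lt_of_differenceSolutionTerm_ne_zero (hp : 0 < p) {n : ℤ} {u : ℝ}
    (h : differenceSolutionTerm K p n u ≠ 0) : |(n : ℝ)| < |u| / p + 1 := by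
  contrapose! h
  have hu : |u / p| = |u| / p := by rw [abs_div, abs_of_pos hp]
  rcases lt_or_ge n 0 with hn | hn
  · have hn' : (n : ℝ) < 0 := by exact_mod_cast hn
    rw [abs_of_neg hn'] at h
    have : 1 ≤ u / p - n := by linarith [neg_abs_le (u / p)]
    simp [differenceSolutionTerm, smoothTransition.one_of_one_le this, hn]
  · have hn' : (0 : ℝ) ≤ n := by exact_mod_cast hn
    rw [abs_of_nonneg hn'] at h
    have : u / p - n ≤ 0 := by linarith [le_abs_self (u / p)]
    simp [differenceSolutionTerm, smoothTransition.zero_of_nonpos this, not_lt.2 hn]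

theorem locallyFinite_support_differenceSolutionTerm (hp : 0 < p) :
    LocallyFinite fun n => Function.support (differenceSolutionTerm K p n) := by
  intro u₀
  refine ⟨Metric.ball u₀ 1, Metric.ball_mem_nhds u₀ one_pos, ?_⟩
  have hfin : (Metric.ball (0 : ℤ) ((|u₀| + 1) / p + 1)).Finite := by
    rw [Int.ball_eq_Ioo]
    exact Set.finite_Ioo _ _
  refine hfin.subset ?_
  rintro n ⟨u, hn, hu⟩
  rw [Metric.mem_ball, Real.dist_eq] at hu
  rw [Metric.mem_ball, Int.dist_eq, Int.cast_zero, sub_zero]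
  calc |(n : ℝ)| < |u| / p + 1 := abs_lt_of_differenceSolutionTerm_ne_zero hp hn
    _ ≤ (|u₀| + 1) / p + 1 := by gcongr; linarith [abs_sub_abs_le_abs_sub u u₀]

theorem contDiff_differenceSolution {n : ℕ∞} (hp : 0 < p) (hK : ContDiff ℝ n K) :
    ContDiff ℝ n (differenceSolution K p) := by
  have hterm (m : ℤ) : ContDiff ℝ n (differenceSolutionTerm K p m) := by
    unfold differenceSolutionTerm
    fun_prop
  rw [← contMDiff_iff_contDiff]
  exact contMDiff_finsum (fun m => (hterm m).contMDiff)
    (locallyFinite_support_differenceSolutionTerm hp)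

theorem differenceSolution_add_period (hp : 0 < p) (u : ℝ) :
    differenceSolution K p (u + p) = differenceSolution K p u + K u := by
  have hfin : (fun n => differenceSolutionTerm K p n u).HasFiniteSupport :=
    (locallyFinite_support_differenceSolutionTerm hp).point_finite u
  have hsingle : (fun n : ℤ => if n = 0 then K u else 0).HasFiniteSupport :=
    (Set.finite_singleton 0).subset (Function.support_subset_iff'.2 fun n hn => if_neg hn)
  simp_rw [differenceSolution, differenceSolutionTerm_add_period hp.ne']
  rw [finsum_add_distrib (f := fun n => differenceSolutionTerm K p (n - 1) u)
      (hfin.comp_of_injective (sub_left_injective (b := 1))) hsingle,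
    finsum_eq_single _ 0 fun n hn => if_neg hn, if_pos rfl]
  congr 1
  exact finsum_comp_equiv (Equiv.subRight (1 : ℤ)) (f := fun n => differenceSolutionTerm K p n u)

theorem exists_contDiff_add_period_eq_add {n : ℕ∞} (hp : 0 < p) (hK : ContDiff ℝ n K) :
    ∃ W : ℝ → ℝ, ContDiff ℝ n W ∧ ∀ u, W (u + p) = W u + K u :=
  ⟨differenceSolution K p, contDiff_differenceSolution hp hK, differenceSolution_add_period hp⟩

end DifferenceEquation

theorem deriv_deriv_comp_add_add_comp_sub {F G : ℝ → ℝ} (hF : ContDiff ℝ 2 F)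
    (hG : ContDiff ℝ 2 G) (x t : ℝ) :
    deriv (deriv fun s => F (x + s) + G (x - s)) t =
      deriv (deriv fun s => F (s + t) + G (s - t)) x := by
  have hderiv2 (h : ℝ → ℝ) : deriv (deriv h) = iteratedDeriv 2 h := by
    rw [iteratedDeriv_succ, iteratedDeriv_one]
  rw [hderiv2, hderiv2, iteratedDeriv_fun_add (by fun_prop) (by fun_prop),
    iteratedDeriv_fun_add (by fun_prop) (by fun_prop), iteratedDeriv_comp_const_add,
    iteratedDeriv_comp_const_sub, iteratedDeriv_comp_add_const, iteratedDeriv_comp_sub_const]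
  simp

/-- TBVP for the 1D wave equation: given C² data `f`, `g` and `T > 0`, there is a
C² function `y` on `[0,T] × ℝ` with `y_tt - y_xx = 0`, `y(0,x) = f x`, `y(T,x) = g x`. -/
theorem tbvp_wave_1d (f g : ℝ → ℝ) (hf : ContDiff ℝ 2 f) (hg : ContDiff ℝ 2 g)
    (T : ℝ) (hT : 0 < T) :
    ∃ y : ℝ → ℝ → ℝ,
      ContDiffOn ℝ 2 (fun p : ℝ × ℝ => y p.1 p.2) (Set.Icc 0 T ×ˢ Set.univ) ∧
      (∀ t ∈ Set.Icc (0:ℝ) T, ∀ x : ℝ,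
        deriv (deriv (fun s => y s x)) t - deriv (deriv (fun s => y t s)) x = 0) ∧
      (∀ x : ℝ, y 0 x = f x) ∧
      (∀ x : ℝ, y T x = g x) := by
  obtain ⟨W, hW, hW_period⟩ :=
    exists_contDiff_add_period_eq_add (n := 2) (by positivity : 0 < 2 * T)
      (show ContDiff ℝ 2 fun u => g (u + T) - (f (u + 2 * T) + f u) / 2 by fun_prop)
  set F : ℝ → ℝ := fun u => f u / 2 + W u
  set G : ℝ → ℝ := fun u => f u / 2 - W u
  have hF : ContDiff ℝ 2 F := by fun_prop
  have hG : ContDiff ℝ 2 G := by fun_prop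
  refine ⟨fun t x => F (x + t) + G (x - t), ?_, fun t _ x => ?_, fun x => ?_, fun x => ?_⟩
  · exact ContDiff.contDiffOn (by fun_prop)
  · exact sub_eq_zero.2 (deriv_deriv_comp_add_add_comp_sub hF hG x t)
  · simp only [F, G, add_zero, sub_zero]
    ring
  · have h := hW_period (x - T)
    rw [show x - T + 2 * T = x + T by ring, show x - T + T = x by ring] at h
    simp only [F, G]
    linarith
end

section
/- Let T > 0 and let f̃ : ℝ → ℝ be C^2. Define v : ℝ → ℝ by v(x) = u(x − 2NT) + 2·∑_{i=1}^{N} f̃'(x − (2i−1)T) for x ≥ 0 and v(x) = u(x + 2NT) − 2·∑_{i=1}^{N} f̃'(x + (2i−1)T) for x < 0, where N = ⌈(|x|+T)/(2T)⌉ (adjusted so that x − 2NT ∈ [−T,T] for x ≥ 0, resp. x + 2NT ∈ [−T,T] for x < 0), and u : [−T,T] → ℝ is a C^1 function satisfying ∫_{−T}^{T} u(τ)dτ = 2f̃(0), u(T) − u(−T) = 2f̃'(0), and u'₋(T) − u'₊(−T) = 2f̃''(0). Then v is C^1 on ℝ. -/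
/-!
On `[(2k-1)T, (2k+1)T]` the function `v` is given by one formula, built from the C¹ functions
`u` and `f̃'` by translations, so it is C¹ inside each such interval. At a gluing point
`(2k+1)T` the formulas for `k` and `k + 1` differ by `u(T) - u(-T) - 2f̃'(0)` in value and by
`u'(T) - u'(-T) - 2f̃''(0)` in derivative; both vanish, so the one-sided derivatives agree and
`v` is C¹ across the gluing point. Negative `x` reduce to positive ones through `x ↦ -x`, which
turns the construction into the same one for `z ↦ u(-z)` and `z ↦ -f̃'(-z)`.
-/

open Set Filter Topology

theorem derivWithin_Icc_right {f : ℝ → ℝ} {a b : ℝ} (hab : a < b) :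
    derivWithin f (Icc a b) b = derivWithin f (Iic b) b := by
  rw [← Iic_inter_Ici, derivWithin_inter (Ici_mem_nhds hab)]

theorem derivWithin_Icc_left {f : ℝ → ℝ} {a b : ℝ} (hab : a < b) :
    derivWithin f (Icc a b) a = derivWithin f (Ici a) a := by
  rw [← Ici_inter_Iic, derivWithin_inter (Iic_mem_nhds hab)]

theorem hasDerivAt_of_eqOn_Ioc_Ico {v f g : ℝ → ℝ} {a b c y : ℝ} (hab : a < b) (hbc : b < c)
    (hf : DifferentiableOn ℝ f (Icc a b)) (hg : DifferentiableOn ℝ g (Icc b c))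
    (hvf : EqOn v f (Ioc a b)) (hvg : EqOn v g (Ico b c))
    (hfg : derivWithin f (Icc a b) b = derivWithin g (Icc b c) b) (hy : y ∈ Ioo a c) :
    HasDerivAt v (if y ≤ b then derivWithin f (Icc a b) y else derivWithin g (Icc b c) y) y := by
  obtain ⟨hay, hyc⟩ := hy
  rcases lt_trichotomy y b with hyb | rfl | hby
  · have hv : v =ᶠ[𝓝 y] f :=
      eventuallyEq_of_mem (Ioo_mem_nhds hay hyb) fun z hz => hvf (Ioo_subset_Ioc_self hz)
    rw [if_pos hyb.le]
    exact ((hf y ⟨hay.le, hyb.le⟩).hasDerivWithinAt.hasDerivAt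
      (Icc_mem_nhds hay hyb)).congr_of_eventuallyEq hv
  · have hl : HasDerivWithinAt v (derivWithin f (Icc a y) y) (Ioc a y) y :=
      ((hf y ⟨hab.le, le_rfl⟩).hasDerivWithinAt.mono Ioc_subset_Icc_self).congr hvf
        (hvf ⟨hab, le_rfl⟩)
    have hr : HasDerivWithinAt v (derivWithin f (Icc a y) y) (Ico y c) y := by
      rw [hfg]
      exact ((hg y ⟨le_rfl, hbc.le⟩).hasDerivWithinAt.mono Ico_subset_Icc_self).congr hvg
        (hvg ⟨le_rfl, hbc⟩)
    have hlr := hl.union hr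
    rw [Ioc_union_Ico_eq_Ioo hab hbc] at hlr
    rw [if_pos le_rfl]
    exact hlr.hasDerivAt (Ioo_mem_nhds hab hbc)
  · have hv : v =ᶠ[𝓝 y] g :=
      eventuallyEq_of_mem (Ioo_mem_nhds hby hyc) fun z hz => hvg (Ioo_subset_Ico_self hz)
    rw [if_neg hby.not_ge]
    exact ((hg y ⟨hby.le, hyc.le⟩).hasDerivWithinAt.hasDerivAt
      (Icc_mem_nhds hby hyc)).congr_of_eventuallyEq hv

theorem contDiffAt_of_eqOn_Ioc_Ico {v f g : ℝ → ℝ} {a b c : ℝ} (hab : a < b) (hbc : b < c)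
    (hf : ContDiffOn ℝ 1 f (Icc a b)) (hg : ContDiffOn ℝ 1 g (Icc b c))
    (hvf : EqOn v f (Ioc a b)) (hvg : EqOn v g (Ico b c))
    (hfg : derivWithin f (Icc a b) b = derivWithin g (Icc b c) b) :
    ContDiffAt ℝ 1 v b := by
  set D : ℝ → ℝ := fun y =>
    if y ≤ b then derivWithin f (Icc a b) y else derivWithin g (Icc b c) y
  have hD : ∀ y ∈ Ioo a c, HasDerivAt v (D y) y := fun y =>
    hasDerivAt_of_eqOn_Ioc_Ico hab hbc (hf.differentiableOn one_ne_zero)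
      (hg.differentiableOn one_ne_zero) hvf hvg hfg
  have hDc : ContinuousOn D (Icc a c) := by
    rw [← Icc_union_Icc_eq_Icc hab.le hbc.le]
    refine ContinuousOn.union_of_isClosed ?_ ?_ isClosed_Icc isClosed_Icc
    · exact (hf.continuousOn_derivWithin (uniqueDiffOn_Icc hab) le_rfl).congr
        fun y hy => if_pos hy.2
    · refine (hg.continuousOn_derivWithin (uniqueDiffOn_Icc hbc) le_rfl).congr fun y hy => ?_
      rcases hy.1.eq_or_lt with rfl | hby
      · exact (if_pos le_rfl).trans hfg
      · exact if_neg hby.not_ge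
  have hv : ContDiffOn ℝ 1 v (Ioo a c) := by
    rw [show (1 : WithTop ℕ∞) = 0 + 1 from rfl, contDiffOn_succ_iff_deriv_of_isOpen isOpen_Ioo]
    refine ⟨fun y hy => (hD y hy).differentiableAt.differentiableWithinAt, by simp, ?_⟩
    exact contDiffOn_zero.mpr ((hDc.mono Ioo_subset_Icc_self).congr fun y hy => (hD y hy).deriv)
  exact hv.contDiffAt (Ioo_mem_nhds hab hbc)

/-- On `[(2k-1)T, (2k+1)T]` the glued velocity is `gluedPiece T u f̃' k`. -/
noncomputable def gluedPiece (T : ℝ) (w h : ℝ → ℝ) (k : ℕ) (x : ℝ) : ℝ :=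
  w (x - 2 * k * T) + 2 * ∑ i ∈ Finset.range k, h (x - (2 * i + 1) * T)

section GluedPiece

variable {T : ℝ} {w h : ℝ → ℝ}

theorem gluedPiece_succ_eq (hw : w T - w (-T) = 2 * h 0) (k : ℕ) :
    gluedPiece T w h (k + 1) ((2 * k + 1) * T) = gluedPiece T w h k ((2 * k + 1) * T) := by
  simp only [gluedPiece, Finset.sum_range_succ, Nat.cast_add, Nat.cast_one]
  rw [show (2 * (k : ℝ) + 1) * T - 2 * ((k : ℝ) + 1) * T = -T by ring,
    show (2 * (k : ℝ) + 1) * T - 2 * (k : ℝ) * T = T by ring, sub_self]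
  linarith

theorem gluedPiece_eq_of_mem_Icc (hT : 0 < T) (hw : w T - w (-T) = 2 * h 0) {x : ℝ} {j k : ℕ}
    (hj : x - 2 * j * T ∈ Icc (-T) T) (hk : x - 2 * k * T ∈ Icc (-T) T) :
    gluedPiece T w h j x = gluedPiece T w h k x := by
  obtain ⟨hj₁, hj₂⟩ := hj
  obtain ⟨hk₁, hk₂⟩ := hk
  have hjk : (j : ℝ) ≤ k + 1 := by nlinarith
  have hkj : (k : ℝ) ≤ j + 1 := by nlinarith
  have : j = k ∨ j = k + 1 ∨ k = j + 1 := by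
    have : j ≤ k + 1 := by exact_mod_cast hjk
    have : k ≤ j + 1 := by exact_mod_cast hkj
    omega
  rcases this with rfl | rfl | rfl
  · rfl
  · push_cast at hj₁
    rw [show x = (2 * k + 1) * T by linarith]
    exact gluedPiece_succ_eq hw k
  · push_cast at hk₁
    rw [show x = (2 * j + 1) * T by linarith]
    exact (gluedPiece_succ_eq hw j).symm

theorem contDiffOn_gluedPiece {n : WithTop ℕ∞} {s : Set ℝ} (hw : ContDiffOn ℝ n w s)
    (hh : ContDiff ℝ n h) (k : ℕ) :
    ContDiffOn ℝ n (gluedPiece T w h k) ((fun x => x - 2 * k * T) ⁻¹' s) :=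
  (hw.comp (contDiffOn_id.sub contDiffOn_const) (mapsTo_preimage _ _)).add
    (contDiffOn_const.mul (ContDiffOn.sum fun _ _ =>
      (hh.comp (contDiff_id.sub contDiff_const)).contDiffOn))

theorem hasDerivWithinAt_gluedPiece {w' : ℝ → ℝ} {s t : Set ℝ} {x : ℝ} {k : ℕ}
    (hw : HasDerivWithinAt w (w' (x - 2 * k * T)) s (x - 2 * k * T)) (hh : Differentiable ℝ h)
    (hts : MapsTo (fun y => y - 2 * k * T) t s) :
    HasDerivWithinAt (gluedPiece T w h k) (gluedPiece T w' (deriv h) k x) t x := by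
  have hsum : HasDerivAt (fun y => 2 * ∑ i ∈ Finset.range k, h (y - (2 * i + 1) * T))
      (2 * ∑ i ∈ Finset.range k, deriv h (x - (2 * i + 1) * T)) x :=
    (HasDerivAt.fun_sum fun i _ => (hh _).hasDerivAt.comp_sub_const x _).const_mul 2
  have hshift := hw.comp x ((hasDerivWithinAt_id x t).sub_const _) hts
  rw [mul_one] at hshift
  exact hshift.add hsum.hasDerivWithinAt

theorem contDiffAt_odd_mul_of_eq_gluedPiece (hT : 0 < T) (hw : ContDiffOn ℝ 1 w (Icc (-T) T))
    (hh : ContDiff ℝ 1 h)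
    (hw₁ : derivWithin w (Icc (-T) T) T - derivWithin w (Icc (-T) T) (-T) = 2 * deriv h 0)
    {V : ℝ → ℝ}
    (hV : ∀ x (k : ℕ), 0 < x → x - 2 * k * T ∈ Icc (-T) T → V x = gluedPiece T w h k x)
    (k : ℕ) : ContDiffAt ℝ 1 V ((2 * k + 1) * T) := by
  have hk : (0 : ℝ) ≤ k := k.cast_nonneg
  have hw' : ∀ y ∈ Icc (-T) T,
      HasDerivWithinAt w (derivWithin w (Icc (-T) T) y) (Icc (-T) T) y :=
    fun y hy => (hw.differentiableOn one_ne_zero y hy).hasDerivWithinAt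
  have hleft : MapsTo (fun y => y - 2 * k * T) (Icc (2 * k * T) ((2 * k + 1) * T)) (Icc (-T) T) :=
    fun y hy => ⟨by nlinarith [hy.1], by linarith [hy.2]⟩
  have hright : MapsTo (fun y => y - 2 * (k + 1 : ℕ) * T)
      (Icc ((2 * k + 1) * T) ((2 * k + 2) * T)) (Icc (-T) T) :=
    fun y hy => ⟨by push_cast; linarith [hy.1], by push_cast; linarith [hy.2]⟩
  have hdl : derivWithin (gluedPiece T w h k) (Icc (2 * k * T) ((2 * k + 1) * T))
      ((2 * k + 1) * T)
      = gluedPiece T (derivWithin w (Icc (-T) T)) (deriv h) k ((2 * k + 1) * T) := by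
    refine (hasDerivWithinAt_gluedPiece (hw' _ ?_) (hh.differentiable one_ne_zero)
      hleft).derivWithin (uniqueDiffOn_Icc (by nlinarith) _ (right_mem_Icc.mpr (by nlinarith)))
    constructor <;> linarith
  have hdr : derivWithin (gluedPiece T w h (k + 1)) (Icc ((2 * k + 1) * T) ((2 * k + 2) * T))
      ((2 * k + 1) * T)
      = gluedPiece T (derivWithin w (Icc (-T) T)) (deriv h) (k + 1) ((2 * k + 1) * T) := by
    refine (hasDerivWithinAt_gluedPiece (hw' _ ?_) (hh.differentiable one_ne_zero)
      hright).derivWithin (uniqueDiffOn_Icc (by nlinarith) _ (left_mem_Icc.mpr (by nlinarith)))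
    constructor <;> push_cast <;> linarith
  refine contDiffAt_of_eqOn_Ioc_Ico (a := 2 * k * T) (c := (2 * k + 2) * T) (by linarith)
    (by linarith) ((contDiffOn_gluedPiece hw hh k).mono hleft)
    ((contDiffOn_gluedPiece hw hh (k + 1)).mono hright) ?_ ?_ ?_
  · exact fun y hy => hV y k (by nlinarith [hy.1]) (hleft (Ioc_subset_Icc_self hy))
  · exact fun y hy => hV y (k + 1) (by nlinarith [hy.1]) (hright (Ico_subset_Icc_self hy))
  · rw [hdl, hdr, gluedPiece_succ_eq hw₁]

theorem contDiffAt_of_eq_gluedPiece_of_mem_Ioo (hw : ContDiffOn ℝ 1 w (Icc (-T) T))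
    (hh : ContDiff ℝ 1 h) {V : ℝ → ℝ}
    (hV : ∀ x (k : ℕ), 0 < x → x - 2 * k * T ∈ Icc (-T) T → V x = gluedPiece T w h k x)
    {x : ℝ} {k : ℕ} (hx : 0 < x) (hxk : x - 2 * k * T ∈ Ioo (-T) T) :
    ContDiffAt ℝ 1 V x := by
  have hnhds : (fun y => y - 2 * k * T) ⁻¹' Icc (-T) T ∈ 𝓝 x :=
    (continuous_sub_right _).continuousAt.preimage_mem_nhds (Icc_mem_nhds hxk.1 hxk.2)
  refine ((contDiffOn_gluedPiece hw hh k).contDiffAt hnhds).congr_of_eventuallyEq ?_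
  filter_upwards [Ioi_mem_nhds hx, hnhds] with y hy hyk using hV y k hy hyk

theorem contDiffAt_of_eq_gluedPiece (hT : 0 < T) (hw : ContDiffOn ℝ 1 w (Icc (-T) T))
    (hh : ContDiff ℝ 1 h) (hw₀ : w T - w (-T) = 2 * h 0)
    (hw₁ : derivWithin w (Icc (-T) T) T - derivWithin w (Icc (-T) T) (-T) = 2 * deriv h 0)
    {N : ℝ → ℕ} (hN : ∀ x, 0 < x → x - 2 * N x * T ∈ Icc (-T) T)
    {V : ℝ → ℝ} (hV : ∀ x, 0 < x → V x = gluedPiece T w h (N x) x)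
    {x : ℝ} (hx : 0 < x) : ContDiffAt ℝ 1 V x := by
  have hV' : ∀ y (k : ℕ), 0 < y → y - 2 * k * T ∈ Icc (-T) T →
      V y = gluedPiece T w h k y :=
    fun y k hy hk => (hV y hy).trans (gluedPiece_eq_of_mem_Icc hT hw₀ (hN y hy) hk)
  obtain ⟨hx₁, hx₂⟩ := hN x hx
  generalize N x = k at hx₁ hx₂
  rcases hx₁.eq_or_lt with hx₁ | hx₁
  · obtain ⟨j, rfl⟩ : ∃ j, k = j + 1 :=
      Nat.exists_eq_succ_of_ne_zero (by rintro rfl; simp at hx₁; linarith)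
    push_cast at hx₁
    rw [show x = (2 * j + 1) * T by linarith]
    exact contDiffAt_odd_mul_of_eq_gluedPiece hT hw hh hw₁ hV' j
  rcases hx₂.eq_or_lt with hx₂ | hx₂
  · rw [show x = (2 * k + 1) * T by linarith]
    exact contDiffAt_odd_mul_of_eq_gluedPiece hT hw hh hw₁ hV' k
  · exact contDiffAt_of_eq_gluedPiece_of_mem_Ioo hw hh hV' hx ⟨hx₁, hx₂⟩

theorem contDiffAt_of_eq_gluedPiece_neg (hT : 0 < T) (hw : ContDiffOn ℝ 1 w (Icc (-T) T))
    (hh : ContDiff ℝ 1 h) (hw₀ : w T - w (-T) = 2 * h 0)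
    (hw₁ : derivWithin w (Icc (-T) T) T - derivWithin w (Icc (-T) T) (-T) = 2 * deriv h 0)
    {N : ℝ → ℕ} (hN : ∀ x, x < 0 → x + 2 * N x * T ∈ Icc (-T) T)
    {V : ℝ → ℝ}
    (hV : ∀ x, x < 0 →
      V x = w (x + 2 * N x * T) - 2 * ∑ i ∈ Finset.range (N x), h (x + (2 * i + 1) * T))
    {x : ℝ} (hx : x < 0) : ContDiffAt ℝ 1 V x := by
  have hneg : MapsTo (fun z : ℝ => -z) (Icc (-T) T) (Icc (-T) T) :=
    fun z hz => ⟨by linarith [hz.2], by linarith [hz.1]⟩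
  have hw' : ContDiffOn ℝ 1 (fun z => w (-z)) (Icc (-T) T) := hw.comp contDiff_neg.contDiffOn hneg
  have hh' : ContDiff ℝ 1 (fun z => -h (-z)) := (hh.comp contDiff_neg).neg
  have hw₀' : w (-T) - w (-(-T)) = 2 * -h (-0) := by
    rw [neg_neg, neg_zero]
    linarith
  have hw₁' : derivWithin (fun z => w (-z)) (Icc (-T) T) T
      - derivWithin (fun z => w (-z)) (Icc (-T) T) (-T) = 2 * deriv (fun z => -h (-z)) 0 := by
    simp only [derivWithin_comp_neg, neg_Icc, neg_neg, deriv.fun_neg, deriv_comp_neg, neg_zero]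
    linarith
  have hN' : ∀ y, 0 < y → y - 2 * N (-y) * T ∈ Icc (-T) T := fun y hy => by
    obtain ⟨h₁, h₂⟩ := hN (-y) (by linarith)
    constructor <;> linarith
  have hV' : ∀ y, 0 < y →
      V (-y) = gluedPiece T (fun z => w (-z)) (fun z => -h (-z)) (N (-y)) y := by
    intro y hy
    rw [hV (-y) (by linarith)]
    simp only [gluedPiece, neg_sub', sub_neg_eq_add, Finset.sum_neg_distrib, mul_neg,
      ← sub_eq_add_neg]
  have := (contDiffAt_of_eq_gluedPiece hT hw' hh' hw₀' hw₁' hN' hV' (neg_pos.mpr hx)).comp x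
    contDiff_neg.contDiffAt
  simpa [Function.comp_def] using this

end GluedPiece

theorem glued_velocity_C1_general (T : ℝ) (hT : 0 < T) (ft : ℝ → ℝ) (hft : ContDiff ℝ 2 ft)
    (u : ℝ → ℝ) (hu : ContDiffOn ℝ 1 u (Set.Icc (-T) T))
    (hu2 : u T - u (-T) = 2 * deriv ft 0)
    (hu3 : derivWithin u (Set.Iic T) T - derivWithin u (Set.Ici (-T)) (-T)
            = 2 * deriv (deriv ft) 0)
    (N : ℝ → ℕ)
    (hN1 : ∀ x : ℝ, 0 ≤ x → x - 2 * (N x : ℝ) * T ∈ Set.Icc (-T) T)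
    (hN2 : ∀ x : ℝ, x < 0 → x + 2 * (N x : ℝ) * T ∈ Set.Icc (-T) T)
    (v : ℝ → ℝ)
    (hv1 : ∀ x : ℝ, 0 ≤ x →
      v x = u (x - 2 * (N x : ℝ) * T)
            + 2 * ∑ i ∈ Finset.range (N x), deriv ft (x - (2 * (i : ℝ) + 1) * T))
    (hv2 : ∀ x : ℝ, x < 0 →
      v x = u (x + 2 * (N x : ℝ) * T)
            - 2 * ∑ i ∈ Finset.range (N x), deriv ft (x + (2 * (i : ℝ) + 1) * T)) :
    ContDiff ℝ 1 v := by
  have hTT : -T < T := by linarith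
  rw [← derivWithin_Icc_right hTT, ← derivWithin_Icc_left hTT] at hu3
  have hg : ContDiff ℝ 1 (deriv ft) := hft.deriv'
  have hN0 : ∀ x ∈ Ioo (-T) T, N x = 0 := by
    rintro x ⟨hx₁, hx₂⟩
    by_contra hne
    have : (1 : ℝ) ≤ N x := by exact_mod_cast Nat.one_le_iff_ne_zero.mpr hne
    rcases le_or_gt 0 x with hx | hx
    · nlinarith [(hN1 x hx).1]
    · nlinarith [(hN2 x hx).2]
  have hvu : v =ᶠ[𝓝 0] u := by
    filter_upwards [Ioo_mem_nhds (neg_neg_of_pos hT) hT] with x hx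
    rcases le_or_gt 0 x with hx₀ | hx₀
    · simp [hv1 x hx₀, hN0 x hx]
    · simp [hv2 x hx₀, hN0 x hx]
  rw [contDiff_iff_contDiffAt]
  intro x
  rcases lt_trichotomy x 0 with hx | rfl | hx
  · exact contDiffAt_of_eq_gluedPiece_neg hT hu hg hu2 hu3 hN2 hv2 hx
  · exact (hu.contDiffAt (Icc_mem_nhds (by linarith) hT)).congr_of_eventuallyEq hvu
  · exact contDiffAt_of_eq_gluedPiece hT hu hg hu2 hu3 (fun x hx => hN1 x hx.le)
      (fun x hx => hv1 x hx.le) hx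

/-- The glued initial velocity `v`, built from a C¹ function `u` on `[-T,T]` (satisfying the
three matching conditions) and translates of `f̃'`, is C¹ on all of ℝ. -/
theorem glued_velocity_C1 (T : ℝ) (hT : 0 < T) (ft : ℝ → ℝ) (hft : ContDiff ℝ 2 ft)
    (u : ℝ → ℝ) (hu : ContDiffOn ℝ 1 u (Set.Icc (-T) T))
    (hu1 : (∫ τ in (-T)..T, u τ) = 2 * ft 0)
    (hu2 : u T - u (-T) = 2 * deriv ft 0)
    (hu3 : derivWithin u (Set.Iic T) T - derivWithin u (Set.Ici (-T)) (-T)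
            = 2 * deriv (deriv ft) 0)
    (N : ℝ → ℕ)
    (hN1 : ∀ x : ℝ, 0 ≤ x → x - 2 * (N x : ℝ) * T ∈ Set.Icc (-T) T)
    (hN2 : ∀ x : ℝ, x < 0 → x + 2 * (N x : ℝ) * T ∈ Set.Icc (-T) T)
    (v : ℝ → ℝ)
    (hv1 : ∀ x : ℝ, 0 ≤ x →
      v x = u (x - 2 * (N x : ℝ) * T)
            + 2 * ∑ i ∈ Finset.range (N x), deriv ft (x - (2 * (i : ℝ) + 1) * T))
    (hv2 : ∀ x : ℝ, x < 0 →
      v x = u (x + 2 * (N x : ℝ) * T)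
            - 2 * ∑ i ∈ Finset.range (N x), deriv ft (x + (2 * (i : ℝ) + 1) * T)) :
    ContDiff ℝ 1 v :=
  glued_velocity_C1_general T hT ft hft u hu hu2 hu3 N hN1 hN2 v hv1 hv2
end

section
/- Let T > 0 and f̃ : ℝ → ℝ be C^2 with f̃(0) known. With v defined as in the gluing construction (v(x) = u(x−2NT) + 2∑_{i=1}^{N} f̃'(x−(2i−1)T) for x ≥ 0 and symmetrically for x < 0, where u satisfies ∫_{−T}^{T} u = 2f̃(0), u(T)−u(−T)=2f̃'(0), u'₋(T)−u'₊(−T)=2f̃''(0)), the function ỹ(t,x) = (1/2)∫_{x−t}^{x+t} v(τ)dτ satisfies ỹ(T,x) = f̃(x) for all x ∈ ℝ. -/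
/-!
On the cell `[-T, T]` the glued velocity `v` is `u`, and the cell formulas satisfy
`v (x + T) - v (x - T) = 2 f̃' x`; the compatibility `u T - u (-T) = 2 f̃' 0` makes adjacent cell
formulas agree on the common endpoint, so the admissible choice of `N` does not matter and `v` is
continuous. Translating the window of integration, `∫_{x-T}^{x+T} v - ∫_{-T}^{T} v` equals
`∫_0^x (v (s + T) - v (s - T)) ds = 2 (f̃ x - f̃ 0)`, and `∫_{-T}^{T} u = 2 f̃ 0`.
-/

open Set

theorem continuous_of_continuousOn_Icc_of_apply_add_eq {v h : ℝ → ℝ} {a c : ℝ} (hc : 0 < c)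
    (hv : ContinuousOn v (Icc a (a + c))) (hh : Continuous h)
    (hvh : ∀ x, v (x + c) = v x + h x) : Continuous v := by
  have hcells : ∀ n : ℕ, ContinuousOn v (Icc (a - n * c) (a + c + n * c)) := by
    intro n
    induction n with
    | zero => simpa using hv
    | succ n ih =>
      have hleft : ContinuousOn v (Icc (a - (n + 1) * c) (a - n * c)) := by
        have hshift : ContinuousOn (fun x => v (x + c) - h x) (Icc (a - (n + 1) * c) (a - n * c)) :=
          (ih.comp (continuous_add_const c).continuousOn fun x hx => by
            constructor <;> nlinarith [hx.1, hx.2]).sub hh.continuousOn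
        exact hshift.congr fun x _ => by simp [hvh x]
      have hright : ContinuousOn v (Icc (a + c + n * c) (a + c + (n + 1) * c)) := by
        have hshift : ContinuousOn (fun x => v (x - c) + h (x - c))
            (Icc (a + c + n * c) (a + c + (n + 1) * c)) :=
          (ih.comp (continuous_sub_right c).continuousOn fun x hx => by
            constructor <;> nlinarith [hx.1, hx.2]).add
            (hh.comp (continuous_sub_right c)).continuousOn
        exact hshift.congr fun x _ => by simp [← hvh (x - c)]
      have hunion := (hleft.union_of_isClosed ih isClosed_Icc isClosed_Icc).union_of_isClosed
        hright (isClosed_Icc.union isClosed_Icc) isClosed_Icc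
      push_cast
      rwa [Icc_union_Icc_eq_Icc (by nlinarith) (by nlinarith),
        Icc_union_Icc_eq_Icc (by nlinarith) (by nlinarith)] at hunion
  refine continuous_iff_continuousAt.2 fun x => ?_
  obtain ⟨n, hn⟩ := exists_nat_gt (|x - a| / c)
  rw [div_lt_iff₀ hc] at hn
  exact (hcells n).continuousAt
    (Icc_mem_nhds (by linarith [neg_abs_le (x - a)]) (by linarith [le_abs_self (x - a)]))

theorem integral_sub_add_eq_add_sub_of_hasDerivAt {v f f' : ℝ → ℝ} {T : ℝ}
    (hv : Continuous v) (hf : ∀ x, HasDerivAt f (f' x) x) (hf' : Continuous f')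
    (hvf : ∀ x, v (x + T) - v (x - T) = f' x) (x : ℝ) :
    ∫ τ in (x - T)..(x + T), v τ = (∫ τ in (-T)..T, v τ) + (f x - f 0) := by
  have hint : ∀ a b, IntervalIntegrable v MeasureTheory.volume a b := hv.intervalIntegrable
  have hshift : (∫ τ in (x - T)..(x + T), v τ) - ∫ τ in (-T)..T, v τ
      = ∫ s in (0 : ℝ)..x, (v (s + T) - v (s - T)) := by
    rw [intervalIntegral.integral_sub
        ((by fun_prop : Continuous fun s => v (s + T)).intervalIntegrable _ _)
        ((by fun_prop : Continuous fun s => v (s - T)).intervalIntegrable _ _),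
      intervalIntegral.integral_comp_add_right v, intervalIntegral.integral_comp_sub_right v,
      zero_add, zero_sub,
      intervalIntegral.integral_interval_sub_interval_comm' (hint _ _) (hint _ _) (hint _ _)]
  have hftc : ∫ s in (0 : ℝ)..x, f' s = f x - f 0 :=
    intervalIntegral.integral_eq_sub_of_hasDerivAt (fun y _ => hf y) (hf'.intervalIntegrable _ _)
  simp only [hvf] at hshift
  linarith

theorem eq_of_sub_two_mul_mem_Icc {P : ℕ → ℝ} {T y : ℝ} (hT : 0 < T)
    (hP : ∀ k : ℕ, y - 2 * k * T = T → P (k + 1) = P k) {k m : ℕ}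
    (hk : y - 2 * k * T ∈ Icc (-T) T) (hm : y - 2 * m * T ∈ Icc (-T) T) : P k = P m := by
  wlog hkm : k ≤ m generalizing k m
  · exact (this hm hk (by omega)).symm
  have hle : (m : ℝ) ≤ k + 1 := by nlinarith [hk.2, hm.1]
  obtain rfl | rfl : m = k ∨ m = k + 1 := by
    have : m ≤ k + 1 := by exact_mod_cast hle
    omega
  · rfl
  · refine (hP k (le_antisymm hk.2 ?_)).symm
    push_cast at hm
    linarith [hm.1]

noncomputable def gluedVelocityPos (T : ℝ) (ft u : ℝ → ℝ) (k : ℕ) (x : ℝ) : ℝ :=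
  u (x - 2 * (k : ℝ) * T) + 2 * ∑ i ∈ Finset.range k, deriv ft (x - (2 * (i : ℝ) + 1) * T)

noncomputable def gluedVelocityNeg (T : ℝ) (ft u : ℝ → ℝ) (k : ℕ) (x : ℝ) : ℝ :=
  u (x + 2 * (k : ℝ) * T) - 2 * ∑ i ∈ Finset.range k, deriv ft (x + (2 * (i : ℝ) + 1) * T)

section GluedVelocity

variable {T : ℝ} {ft u : ℝ → ℝ}

@[simp]
theorem gluedVelocityPos_zero (x : ℝ) : gluedVelocityPos T ft u 0 x = u x := by
  simp [gluedVelocityPos]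

@[simp]
theorem gluedVelocityNeg_zero (x : ℝ) : gluedVelocityNeg T ft u 0 x = u x := by
  simp [gluedVelocityNeg]

theorem gluedVelocityPos_succ_add (k : ℕ) (x : ℝ) :
    gluedVelocityPos T ft u (k + 1) (x + 2 * T)
      = gluedVelocityPos T ft u k x + 2 * deriv ft (x + T) := by
  simp only [gluedVelocityPos, Finset.sum_range_succ', Nat.cast_add, Nat.cast_one]
  ring_nf

theorem gluedVelocityNeg_succ (k : ℕ) (x : ℝ) :
    gluedVelocityNeg T ft u (k + 1) x
      = gluedVelocityNeg T ft u k (x + 2 * T) - 2 * deriv ft (x + T) := by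
  simp only [gluedVelocityNeg, Finset.sum_range_succ', Nat.cast_add, Nat.cast_one]
  ring_nf

theorem gluedVelocityPos_succ_of_sub_eq (hu : u T - u (-T) = 2 * deriv ft 0) {k : ℕ} {x : ℝ}
    (hx : x - 2 * k * T = T) :
    gluedVelocityPos T ft u (k + 1) x = gluedVelocityPos T ft u k x := by
  have hmid : x - (2 * (k : ℝ) + 1) * T = 0 := by linarith
  have hend : x - 2 * ((k + 1 : ℕ) : ℝ) * T = -T := by push_cast; linarith
  rw [gluedVelocityPos, gluedVelocityPos, Finset.sum_range_succ, hmid, hend, hx]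
  linarith

theorem gluedVelocityNeg_succ_of_add_eq (hu : u T - u (-T) = 2 * deriv ft 0) {k : ℕ} {x : ℝ}
    (hx : x + 2 * k * T = -T) :
    gluedVelocityNeg T ft u (k + 1) x = gluedVelocityNeg T ft u k x := by
  have hmid : x + (2 * (k : ℝ) + 1) * T = 0 := by linarith
  have hend : x + 2 * ((k + 1 : ℕ) : ℝ) * T = T := by push_cast; linarith
  rw [gluedVelocityNeg, gluedVelocityNeg, Finset.sum_range_succ, hmid, hend, hx]
  linarith

variable {v : ℝ → ℝ} {N : ℝ → ℕ}

theorem apply_eq_gluedVelocityPos (hT : 0 < T) (hu : u T - u (-T) = 2 * deriv ft 0)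
    (hN : ∀ x : ℝ, 0 ≤ x → x - 2 * (N x : ℝ) * T ∈ Icc (-T) T)
    (hv : ∀ x : ℝ, 0 ≤ x → v x = gluedVelocityPos T ft u (N x) x)
    (x : ℝ) (hx : 0 ≤ x) (k : ℕ) (hk : x - 2 * k * T ∈ Icc (-T) T) :
    v x = gluedVelocityPos T ft u k x :=
  (hv x hx).trans <| eq_of_sub_two_mul_mem_Icc (P := (gluedVelocityPos T ft u · x)) hT
    (fun _ => gluedVelocityPos_succ_of_sub_eq hu) (hN x hx) hk

theorem apply_eq_gluedVelocityNeg (hT : 0 < T) (hu : u T - u (-T) = 2 * deriv ft 0)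
    (hN : ∀ x : ℝ, x < 0 → x + 2 * (N x : ℝ) * T ∈ Icc (-T) T)
    (hv : ∀ x : ℝ, x < 0 → v x = gluedVelocityNeg T ft u (N x) x)
    (x : ℝ) (hx : x < 0) (k : ℕ) (hk : x + 2 * k * T ∈ Icc (-T) T) :
    v x = gluedVelocityNeg T ft u k x := by
  have hmem : ∀ j : ℕ, x + 2 * j * T ∈ Icc (-T) T → -x - 2 * j * T ∈ Icc (-T) T :=
    fun j hj => ⟨by linarith [hj.2], by linarith [hj.1]⟩
  refine (hv x hx).trans <| eq_of_sub_two_mul_mem_Icc (P := (gluedVelocityNeg T ft u · x)) hT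
    (fun j hj => ?_) (hmem _ (hN x hx)) (hmem _ hk)
  exact gluedVelocityNeg_succ_of_add_eq hu (by linarith)

theorem eqOn_Icc_of_gluedVelocity (hT : 0 < T) (hu : u T - u (-T) = 2 * deriv ft 0)
    (hN₁ : ∀ x : ℝ, 0 ≤ x → x - 2 * (N x : ℝ) * T ∈ Icc (-T) T)
    (hN₂ : ∀ x : ℝ, x < 0 → x + 2 * (N x : ℝ) * T ∈ Icc (-T) T)
    (hv₁ : ∀ x : ℝ, 0 ≤ x → v x = gluedVelocityPos T ft u (N x) x)
    (hv₂ : ∀ x : ℝ, x < 0 → v x = gluedVelocityNeg T ft u (N x) x) :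
    EqOn v u (Icc (-T) T) := by
  intro x hx
  rcases le_or_gt 0 x with hx₀ | hx₀
  · simpa using apply_eq_gluedVelocityPos hT hu hN₁ hv₁ x hx₀ 0 (by simpa using hx)
  · simpa using apply_eq_gluedVelocityNeg hT hu hN₂ hv₂ x hx₀ 0 (by simpa using hx)

theorem apply_add_two_mul_of_gluedVelocity (hT : 0 < T) (hu : u T - u (-T) = 2 * deriv ft 0)
    (hN₁ : ∀ x : ℝ, 0 ≤ x → x - 2 * (N x : ℝ) * T ∈ Icc (-T) T)
    (hN₂ : ∀ x : ℝ, x < 0 → x + 2 * (N x : ℝ) * T ∈ Icc (-T) T)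
    (hv₁ : ∀ x : ℝ, 0 ≤ x → v x = gluedVelocityPos T ft u (N x) x)
    (hv₂ : ∀ x : ℝ, x < 0 → v x = gluedVelocityNeg T ft u (N x) x)
    (x : ℝ) :
    v (x + 2 * T) = v x + 2 * deriv ft (x + T) := by
  have hpos := apply_eq_gluedVelocityPos hT hu hN₁ hv₁
  have hneg := apply_eq_gluedVelocityNeg hT hu hN₂ hv₂
  have hcast : ∀ k : ℕ, 2 * ((k + 1 : ℕ) : ℝ) * T = 2 * k * T + 2 * T := fun k => by
    push_cast; ring
  rcases le_or_gt 0 x with hx | hx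
  · rw [hpos _ (by linarith) (N x + 1) (by rw [hcast, add_sub_add_right_eq_sub]; exact hN₁ x hx),
      gluedVelocityPos_succ_add, ← hpos x hx _ (hN₁ x hx)]
  rcases lt_or_ge (x + 2 * T) 0 with hx₂ | hx₂
  · have hk := hN₂ (x + 2 * T) hx₂
    rw [hneg x hx (N (x + 2 * T) + 1) (by rwa [hcast, ← add_assoc, add_right_comm x]),
      gluedVelocityNeg_succ, ← hneg _ hx₂ _ hk]
    ring
  rcases le_or_gt (-T) x with hxT | hxT
  · rw [hpos _ hx₂ (0 + 1) (by constructor <;> push_cast <;> linarith),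
      gluedVelocityPos_succ_add, hneg x hx 0 (by constructor <;> push_cast <;> linarith),
      gluedVelocityPos_zero, gluedVelocityNeg_zero]
  · rw [hpos _ hx₂ 0 (by constructor <;> push_cast <;> linarith),
      hneg x hx (0 + 1) (by constructor <;> push_cast <;> linarith), gluedVelocityNeg_succ,
      gluedVelocityPos_zero, gluedVelocityNeg_zero]
    ring

end GluedVelocity

theorem glued_velocity_terminal_general (T : ℝ) (hT : 0 < T) (ft : ℝ → ℝ) (hft : ContDiff ℝ 2 ft)
    (u : ℝ → ℝ) (hu : ContDiffOn ℝ 1 u (Set.Icc (-T) T))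
    (hu1 : (∫ τ in (-T)..T, u τ) = 2 * ft 0)
    (hu2 : u T - u (-T) = 2 * deriv ft 0)
    (N : ℝ → ℕ)
    (hN1 : ∀ x : ℝ, 0 ≤ x → x - 2 * (N x : ℝ) * T ∈ Set.Icc (-T) T)
    (hN2 : ∀ x : ℝ, x < 0 → x + 2 * (N x : ℝ) * T ∈ Set.Icc (-T) T)
    (v : ℝ → ℝ)
    (hv1 : ∀ x : ℝ, 0 ≤ x →
      v x = u (x - 2 * (N x : ℝ) * T)
            + 2 * ∑ i ∈ Finset.range (N x), deriv ft (x - (2 * (i : ℝ) + 1) * T))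
    (hv2 : ∀ x : ℝ, x < 0 →
      v x = u (x + 2 * (N x : ℝ) * T)
            - 2 * ∑ i ∈ Finset.range (N x), deriv ft (x + (2 * (i : ℝ) + 1) * T)) :
    ∀ x : ℝ, (1 / 2 : ℝ) * ∫ τ in (x - T)..(x + T), v τ = ft x := by
  have hvu : EqOn v u (Icc (-T) T) := eqOn_Icc_of_gluedVelocity hT hu2 hN1 hN2 hv1 hv2
  have hvv := apply_add_two_mul_of_gluedVelocity hT hu2 hN1 hN2 hv1 hv2
  have hft' : Continuous (deriv ft) := hft.continuous_deriv one_le_two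
  have hv : Continuous v :=
    continuous_of_continuousOn_Icc_of_apply_add_eq (by linarith)
      (by rw [show -T + 2 * T = T by ring]; exact hu.continuousOn.congr hvu)
      ((hft'.comp (continuous_add_const T)).const_mul 2) hvv
  have hvf : ∀ x, v (x + T) - v (x - T) = 2 * deriv ft x := fun x => by
    have := hvv (x - T)
    rw [show x - T + 2 * T = x + T by ring, sub_add_cancel] at this
    linarith
  intro x
  rw [integral_sub_add_eq_add_sub_of_hasDerivAt hv
      (fun y => (hft.differentiable two_ne_zero y).hasDerivAt.const_mul 2) (hft'.const_mul 2) hvf x,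
    intervalIntegral.integral_congr (by rwa [uIcc_of_le (by linarith)]), hu1]
  ring

/-- With the glued initial velocity `v`, the d'Alembert solution
`ỹ(t,x) = (1/2)∫_{x-t}^{x+t} v` satisfies the terminal condition `ỹ(T,x) = f̃(x)`. -/
theorem glued_velocity_terminal (T : ℝ) (hT : 0 < T) (ft : ℝ → ℝ) (hft : ContDiff ℝ 2 ft)
    (u : ℝ → ℝ) (hu : ContDiffOn ℝ 1 u (Set.Icc (-T) T))
    (hu1 : (∫ τ in (-T)..T, u τ) = 2 * ft 0)
    (hu2 : u T - u (-T) = 2 * deriv ft 0)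
    (hu3 : derivWithin u (Set.Iic T) T - derivWithin u (Set.Ici (-T)) (-T)
            = 2 * deriv (deriv ft) 0)
    (N : ℝ → ℕ)
    (hN1 : ∀ x : ℝ, 0 ≤ x → x - 2 * (N x : ℝ) * T ∈ Set.Icc (-T) T)
    (hN2 : ∀ x : ℝ, x < 0 → x + 2 * (N x : ℝ) * T ∈ Set.Icc (-T) T)
    (v : ℝ → ℝ)
    (hv1 : ∀ x : ℝ, 0 ≤ x →
      v x = u (x - 2 * (N x : ℝ) * T)
            + 2 * ∑ i ∈ Finset.range (N x), deriv ft (x - (2 * (i : ℝ) + 1) * T))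
    (hv2 : ∀ x : ℝ, x < 0 →
      v x = u (x + 2 * (N x : ℝ) * T)
            - 2 * ∑ i ∈ Finset.range (N x), deriv ft (x + (2 * (i : ℝ) + 1) * T)) :
    ∀ x : ℝ, (1 / 2 : ℝ) * ∫ τ in (x - T)..(x + T), v τ = ft x :=
  glued_velocity_terminal_general T hT ft hft u hu hu1 hu2 N hN1 hN2 v hv1 hv2
end

section
/- If v₁ : ℝ → ℝ is C^1 with ∫_{x−T}^{x+T} v₁(τ)dτ = 0 for all x, and ỹ is a C^2 solution of the two-point boundary value problem ỹ_tt − ỹ_xx = 0, ỹ(0,x) = 0, ỹ(T,x) = f̃(x) on [0,T] × ℝ given by ỹ(t,x) = (1/2)∫_{x−t}^{x+t} v(τ)dτ, then z(t,x) = (1/2)∫_{x−t}^{x+t} (v(τ) + v₁(τ))dτ is also a C^2 solution of the same two-point boundary value problem. In particular, the solution of the TBVP is not unique whenever a nonzero such v₁ exists. -/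
/-!
With `W` a primitive of `w`, d'Alembert's formula reads `(W (x + t) - W (x - t)) / 2`: a
difference of two travelling waves, hence a `C²` solution of the wave equation as soon as `w` is
`C¹`, vanishing at `t = 0`. The formula is additive in `w`, so adding a `v₁` whose integral over
every window `[x - T, x + T]` vanishes leaves the value at time `T` unchanged.
-/

noncomputable def dAlembert (w : ℝ → ℝ) (t x : ℝ) : ℝ :=
  (1 / 2) * ∫ τ in (x - t)..(x + t), w τ

theorem contDiff_primitive {w : ℝ → ℝ} {n : ℕ} (hw : ContDiff ℝ n w) (a : ℝ) :
    ContDiff ℝ (n + 1) fun y => ∫ τ in a..y, w τ := by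
  have hderiv : deriv (fun y => ∫ τ in a..y, w τ) = w :=
    funext (hw.continuous.deriv_integral w a)
  refine contDiff_succ_iff_deriv.2 ⟨fun y => ?_, fun h => absurd h (by simp), by rwa [hderiv]⟩
  exact (hw.continuous.integral_hasStrictDerivAt a y).hasDerivAt.differentiableAt

theorem deriv_deriv_travelling_waves_time {F : ℝ → ℝ} (hF : Differentiable ℝ F)
    (hF' : Differentiable ℝ (deriv F)) (t x : ℝ) :
    deriv (deriv fun s => F (x + s) - F (x - s)) t
      = deriv (deriv F) (x + t) - deriv (deriv F) (x - t) := by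
  have hfirst : deriv (fun s => F (x + s) - F (x - s))
      = fun s => deriv F (x + s) + deriv F (x - s) := by
    funext s
    rw [deriv_fun_sub (by fun_prop) (by fun_prop), deriv_comp_const_add, deriv_comp_const_sub,
      sub_neg_eq_add]
  rw [hfirst, deriv_fun_add (by fun_prop) (by fun_prop), deriv_comp_const_add,
    deriv_comp_const_sub, ← sub_eq_add_neg]

theorem deriv_deriv_travelling_waves_space {F : ℝ → ℝ} (hF : Differentiable ℝ F)
    (hF' : Differentiable ℝ (deriv F)) (t x : ℝ) :
    deriv (deriv fun s => F (s + t) - F (s - t)) x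
      = deriv (deriv F) (x + t) - deriv (deriv F) (x - t) := by
  have hfirst : deriv (fun s => F (s + t) - F (s - t))
      = fun s => deriv F (s + t) - deriv F (s - t) := by
    funext s
    rw [deriv_fun_sub (by fun_prop) (by fun_prop), deriv_comp_add_const, deriv_comp_sub_const]
  rw [hfirst, deriv_fun_sub (by fun_prop) (by fun_prop), deriv_comp_add_const,
    deriv_comp_sub_const]

namespace dAlembert

variable {w : ℝ → ℝ}

theorem eq_primitive_sub (hw : Continuous w) (t x : ℝ) :
    dAlembert w t x
      = (1 / 2) * ((∫ τ in (0:ℝ)..(x + t), w τ) - ∫ τ in (0:ℝ)..(x - t), w τ) := by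
  rw [dAlembert, intervalIntegral.integral_interval_sub_left (hw.intervalIntegrable _ _)
    (hw.intervalIntegrable _ _)]

theorem time_zero (x : ℝ) : dAlembert w 0 x = 0 := by
  simp [dAlembert]

theorem add_apply {w₁ : ℝ → ℝ} (hw : Continuous w) (hw₁ : Continuous w₁) (t x : ℝ) :
    dAlembert (fun τ => w τ + w₁ τ) t x = dAlembert w t x + dAlembert w₁ t x := by
  rw [dAlembert, dAlembert, dAlembert, intervalIntegral.integral_add (hw.intervalIntegrable _ _)
    (hw₁.intervalIntegrable _ _), mul_add]

theorem contDiff (hw : ContDiff ℝ 1 w) :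
    ContDiff ℝ 2 fun p : ℝ × ℝ => dAlembert w p.1 p.2 := by
  have hW : ContDiff ℝ 2 fun y => ∫ τ in (0:ℝ)..y, w τ := contDiff_primitive hw 0
  simp_rw [eq_primitive_sub hw.continuous]
  exact contDiff_const.mul ((hW.comp (contDiff_snd.add contDiff_fst)).sub
    (hW.comp (contDiff_snd.sub contDiff_fst)))

theorem wave_eq (hw : ContDiff ℝ 1 w) (t x : ℝ) :
    deriv (deriv fun s => dAlembert w s x) t = deriv (deriv fun s => dAlembert w t s) x := by
  have hW : ContDiff ℝ 2 fun y => ∫ τ in (0:ℝ)..y, w τ := contDiff_primitive hw 0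
  have hW₁ := hW.differentiable two_ne_zero
  have hW₂ := hW.differentiable_deriv_two
  simp_rw [eq_primitive_sub hw.continuous, deriv_const_mul_field']
  rw [deriv_deriv_travelling_waves_time hW₁ hW₂, deriv_deriv_travelling_waves_space hW₁ hW₂]

end dAlembert

theorem tbvp_nonuniqueness_general (T : ℝ) (ft : ℝ → ℝ)
    (v : ℝ → ℝ) (hv : ContDiff ℝ 1 v)
    (hterm : ∀ x : ℝ, (1 / 2 : ℝ) * ∫ τ in (x - T)..(x + T), v τ = ft x)
    (v₁ : ℝ → ℝ) (hv₁ : ContDiff ℝ 1 v₁)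
    (hint : ∀ x : ℝ, (∫ τ in (x - T)..(x + T), v₁ τ) = 0)
    (z : ℝ → ℝ → ℝ)
    (hz : ∀ t x : ℝ, z t x = (1 / 2 : ℝ) * ∫ τ in (x - t)..(x + t), v τ + v₁ τ) :
    ContDiffOn ℝ 2 (fun p : ℝ × ℝ => z p.1 p.2) (Set.Icc 0 T ×ˢ Set.univ) ∧
    (∀ t ∈ Set.Icc (0:ℝ) T, ∀ x : ℝ,
      deriv (deriv (fun s => z s x)) t - deriv (deriv (fun s => z t s)) x = 0) ∧
    (∀ x : ℝ, z 0 x = 0) ∧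
    (∀ x : ℝ, z T x = ft x) := by
  obtain rfl : z = dAlembert fun τ => v τ + v₁ τ := funext₂ hz
  have hw : ContDiff ℝ 1 fun τ => v τ + v₁ τ := hv.add hv₁
  refine ⟨(dAlembert.contDiff hw).contDiffOn,
    fun t _ x => sub_eq_zero.2 (dAlembert.wave_eq hw t x), dAlembert.time_zero, fun x => ?_⟩
  rw [dAlembert.add_apply hv.continuous hv₁.continuous, dAlembert, dAlembert, hint x, hterm x,
    mul_zero, add_zero]

/-- Non-uniqueness of the TBVP solution: if `v₁` has vanishing integral over every window of
length `2T`, then adding `v₁` to the initial velocity `v` still gives a C² solution of the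
two-point boundary value problem `z_tt - z_xx = 0`, `z(0,x) = 0`, `z(T,x) = f̃ x`. -/
theorem tbvp_nonuniqueness (T : ℝ) (hT : 0 < T) (ft : ℝ → ℝ) (hft : ContDiff ℝ 2 ft)
    (v : ℝ → ℝ) (hv : ContDiff ℝ 1 v)
    (hterm : ∀ x : ℝ, (1 / 2 : ℝ) * ∫ τ in (x - T)..(x + T), v τ = ft x)
    (v₁ : ℝ → ℝ) (hv₁ : ContDiff ℝ 1 v₁)
    (hint : ∀ x : ℝ, (∫ τ in (x - T)..(x + T), v₁ τ) = 0)
    (z : ℝ → ℝ → ℝ)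
    (hz : ∀ t x : ℝ, z t x = (1 / 2 : ℝ) * ∫ τ in (x - t)..(x + t), v τ + v₁ τ) :
    ContDiffOn ℝ 2 (fun p : ℝ × ℝ => z p.1 p.2) (Set.Icc 0 T ×ˢ Set.univ) ∧
    (∀ t ∈ Set.Icc (0:ℝ) T, ∀ x : ℝ,
      deriv (deriv (fun s => z s x)) t - deriv (deriv (fun s => z t s)) x = 0) ∧
    (∀ x : ℝ, z 0 x = 0) ∧
    (∀ x : ℝ, z T x = ft x) :=
  tbvp_nonuniqueness_general T ft v hv hterm v₁ hv₁ hint z hz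
end

section
/- Let L > 0 and T > 0 with T/L a positive integer, and suppose y : [0,T] × ℝ → ℝ is a C^2, L-periodic-in-θ solution of y_tt − y_θθ = 0 with y(0,θ) = f(θ) and y(T,θ) = g(θ). Then g(θ) = f(θ) + (1/L)∫_0^L (g(x) − f(x))dx for all θ; i.e., g − f is constant. -/
/-!
The quantities `y_t + σ y_θ` (`σ = ±1`) are constant along the characteristics `θ + σ t = c`,
because the wave equation and the symmetry of the Hessian make their derivative along
`(1, -σ)` vanish. Hence `y_t(t, θ) = (P (θ + t) + Q (θ - t)) / 2` with `P`, `Q` continuous and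
`L`-periodic, so also `T`-periodic. Integrating in time, `g θ - f θ = ∫₀ᵀ y_t(t, θ) dt` equals
`(∫₀ᵀ P + ∫₀ᵀ Q) / 2`, which does not depend on `θ`.
-/

open Filter Function Set Topology

theorem ContinuousLinearMap.apply_sub_smul_apply_add_smul {E F : Type*} [NormedAddCommGroup E]
    [NormedSpace ℝ E] [NormedAddCommGroup F] [NormedSpace ℝ F] (D : E →L[ℝ] E →L[ℝ] F)
    (hD : ∀ v w, D v w = D w v) (v w : E) (σ : ℝ) :
    D (v - σ • w) (v + σ • w) = D v v - σ ^ 2 • D w w := by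
  simp only [map_sub, map_add, map_smul, sub_apply, smul_apply, hD w v]
  module

section Calculus

variable {E : Type*} [NormedAddCommGroup E] [NormedSpace ℝ E] {Y : E → ℝ}

theorem hasDerivAt_fderiv_apply_comp {γ : ℝ → E} {v : E} {t : ℝ} (hY : ContDiffAt ℝ 2 Y (γ t))
    (hγ : HasDerivAt γ v t) (w : E) :
    HasDerivAt (fun s => fderiv ℝ Y (γ s) w) (fderiv ℝ (fderiv ℝ Y) (γ t) v w) t := by
  have hY' := ((hY.fderiv_right (m := 1) (by norm_num)).differentiableAt one_ne_zero).hasFDerivAt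
  simpa using (hY'.comp_hasDerivAt t hγ).clm_apply (hasDerivAt_const t w)

theorem deriv_deriv_comp_eq_fderiv_fderiv {γ : ℝ → E} {v : E} {t : ℝ}
    (hY : ContDiffAt ℝ 2 Y (γ t)) (hγ : ∀ s, HasDerivAt γ v s) :
    deriv (deriv fun s => Y (γ s)) t = fderiv ℝ (fderiv ℝ Y) (γ t) v v := by
  have hnear : ∀ᶠ s in 𝓝 t, ContDiffAt ℝ 2 Y (γ s) :=
    (hγ t).continuousAt.eventually (hY.eventually (by simp))
  have hderiv : deriv (fun s => Y (γ s)) =ᶠ[𝓝 t] fun s => fderiv ℝ Y (γ s) v :=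
    hnear.mono fun s hs =>
      ((hs.differentiableAt two_ne_zero).hasFDerivAt.comp_hasDerivAt s (hγ s)).deriv
  rw [hderiv.deriv_eq]
  exact (hasDerivAt_fderiv_apply_comp hY (hγ t) v).deriv

theorem fderiv_add_eq_of_eventuallyEq_comp_add {p v : E}
    (h : (fun q => Y (q + v)) =ᶠ[𝓝 p] Y) : fderiv ℝ Y (p + v) = fderiv ℝ Y p := by
  rw [← fderiv_comp_add_right, h.fderiv_eq]

end Calculus

/-- The Riemann invariant `y_t + σ y_θ` at time `t₀`, indexed by the characteristic
`θ + σ t = c` through `(t₀, c - σ t₀)`. -/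
noncomputable def riemannInvariant (Y : ℝ × ℝ → ℝ) (t₀ σ c : ℝ) : ℝ :=
  fderiv ℝ Y (t₀, c - σ * t₀) (1, σ)

section WaveEquation

variable {Y : ℝ × ℝ → ℝ} {a b t t₀ : ℝ}

theorem periodic_riemannInvariant {L : ℝ} (hper : ∀ t ∈ Ioo a b, ∀ θ, Y (t, θ + L) = Y (t, θ))
    (ht₀ : t₀ ∈ Ioo a b) (σ : ℝ) : Periodic (riemannInvariant Y t₀ σ) L := by
  intro c
  have hnear : (fun q => Y (q + (0, L))) =ᶠ[𝓝 (t₀, c - σ * t₀)] Y := by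
    filter_upwards [(isOpen_Ioo.prod isOpen_univ).mem_nhds (mk_mem_prod ht₀ (mem_univ _))]
      with ⟨s, θ⟩ hq
    simpa using hper s hq.1 θ
  have hshift : ((t₀, c + L - σ * t₀) : ℝ × ℝ) = (t₀, c - σ * t₀) + (0, L) := by
    ext <;> simp; ring
  simp only [riemannInvariant, hshift, fderiv_add_eq_of_eventuallyEq_comp_add hnear]

variable (hY : ContDiffOn ℝ 2 Y (Ioo a b ×ˢ univ))
include hY

theorem ContDiffOn.contDiffAt_of_mem_strip (ht : t ∈ Ioo a b) (θ : ℝ) :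
    ContDiffAt ℝ 2 Y (t, θ) :=
  hY.contDiffAt ((isOpen_Ioo.prod isOpen_univ).mem_nhds (mk_mem_prod ht (mem_univ θ)))

theorem continuous_riemannInvariant (ht₀ : t₀ ∈ Ioo a b) (σ : ℝ) :
    Continuous (riemannInvariant Y t₀ σ) := by
  have hD := hY.continuousOn_fderiv_of_isOpen (isOpen_Ioo.prod isOpen_univ) one_le_two
  have hline : Continuous fun c : ℝ => fderiv ℝ Y (t₀, c - σ * t₀) :=
    hD.comp_continuous (by fun_prop) fun c => mk_mem_prod ht₀ (mem_univ _)
  exact hline.clm_apply continuous_const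

variable (hwave : ∀ t ∈ Ioo a b, ∀ θ,
  deriv (deriv fun s => Y (s, θ)) t = deriv (deriv fun s => Y (t, s)) θ)
include hwave

theorem fderiv_apply_eq_riemannInvariant {σ : ℝ} (hσ : σ ^ 2 = 1) (ht : t ∈ Ioo a b)
    (ht₀ : t₀ ∈ Ioo a b) (c : ℝ) :
    fderiv ℝ Y (t, c - σ * t) (1, σ) = riemannInvariant Y t₀ σ c := by
  have hγ : ∀ s : ℝ, HasDerivAt (fun s => ((s, c - σ * s) : ℝ × ℝ)) ((1, 0) - σ • (0, 1)) s := by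
    intro s
    refine ((hasDerivAt_id s).prodMk (((hasDerivAt_id s).const_mul σ).const_sub c)).congr_deriv ?_
    refine Prod.ext ?_ ?_ <;> simp
  have hderiv : ∀ s ∈ Ioo a b, HasDerivAt (fun s => fderiv ℝ Y (s, c - σ * s) (1, σ)) 0 s := by
    intro s hs
    have hp := hY.contDiffAt_of_mem_strip hs (c - σ * s)
    have hwave_p := hwave s hs (c - σ * s)
    rw [deriv_deriv_comp_eq_fderiv_fderiv (γ := fun s' => (s', c - σ * s)) hp
        fun _ => (hasDerivAt_id _).prodMk (hasDerivAt_const _ _),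
      deriv_deriv_comp_eq_fderiv_fderiv (γ := fun s' => (s, s')) hp
        fun _ => (hasDerivAt_const _ _).prodMk (hasDerivAt_id _)] at hwave_p
    have hzero :
        fderiv ℝ (fderiv ℝ Y) (s, c - σ * s) ((1, 0) - σ • (0, 1)) ((1, 0) + σ • (0, 1)) = 0 := by
      rw [ContinuousLinearMap.apply_sub_smul_apply_add_smul _ (hp.isSymmSndFDerivAt (by simp)),
        hσ, one_smul]
      exact sub_eq_zero.mpr hwave_p
    have hdir : ((1, σ) : ℝ × ℝ) = (1, 0) + σ • (0, 1) := by ext <;> simp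
    have h := hasDerivAt_fderiv_apply_comp (γ := fun s => (s, c - σ * s)) hp (hγ s) (1, σ)
    rwa [hdir, hzero, ← hdir] at h
  exact isOpen_Ioo.is_const_of_deriv_eq_zero isPreconnected_Ioo
    (fun s hs => (hderiv s hs).differentiableAt.differentiableWithinAt)
    (fun s hs => (hderiv s hs).deriv) ht ht₀

theorem hasDerivAt_fst_riemannInvariant (ht : t ∈ Ioo a b) (ht₀ : t₀ ∈ Ioo a b) (θ : ℝ) :
    HasDerivAt (fun s => Y (s, θ))
      ((riemannInvariant Y t₀ 1 (θ + t) + riemannInvariant Y t₀ (-1) (θ - t)) / 2) t := by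
  rw [← fderiv_apply_eq_riemannInvariant hY hwave (by norm_num) ht ht₀,
    ← fderiv_apply_eq_riemannInvariant hY hwave (by norm_num) ht ht₀]
  have hdir : ((1, 0) : ℝ × ℝ) = (2 : ℝ)⁻¹ • ((1, 1) + (1, -1)) := by
    refine Prod.ext ?_ ?_ <;> norm_num
  have hsplit : (fderiv ℝ Y (t, θ + t - 1 * t) (1, 1) + fderiv ℝ Y (t, θ - t - -1 * t) (1, -1)) / 2
      = fderiv ℝ Y (t, θ) (1, 0) := by
    rw [hdir, map_smul, map_add, smul_eq_mul]
    ring_nf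
  rw [hsplit]
  exact ((hY.contDiffAt_of_mem_strip ht θ).differentiableAt two_ne_zero).hasFDerivAt.comp_hasDerivAt
    t ((hasDerivAt_id t).prodMk (hasDerivAt_const t θ))

theorem sub_eq_integral_riemannInvariant (hab : a ≤ b) (hYc : ContinuousOn Y (Icc a b ×ˢ univ))
    (ht₀ : t₀ ∈ Ioo a b) (θ : ℝ) :
    Y (b, θ) - Y (a, θ) = ∫ t in a..b,
      (riemannInvariant Y t₀ 1 (θ + t) + riemannInvariant Y t₀ (-1) (θ - t)) / 2 := by
  have hcont : ContinuousOn (fun s => Y (s, θ)) (Icc a b) :=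
    hYc.comp (by fun_prop) fun s hs => mk_mem_prod hs (mem_univ θ)
  have hP := continuous_riemannInvariant hY ht₀ 1
  have hQ := continuous_riemannInvariant hY ht₀ (-1)
  exact (intervalIntegral.integral_eq_sub_of_hasDerivAt_of_le hab hcont
    (fun t ht => hasDerivAt_fst_riemannInvariant hY hwave ht ht₀ θ)
    (Continuous.intervalIntegrable (by fun_prop) _ _)).symm

end WaveEquation

namespace Function.Periodic

variable {E : Type*} [NormedAddCommGroup E] [NormedSpace ℝ E] {P : ℝ → E} {T : ℝ}

theorem intervalIntegral_comp_const_add (hP : Periodic P T) (θ : ℝ) :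
    ∫ t in 0..T, P (θ + t) = ∫ t in 0..T, P t := by
  rw [intervalIntegral.integral_comp_add_left, add_zero, hP.intervalIntegral_add_eq θ 0, zero_add]

theorem intervalIntegral_comp_const_sub (hP : Periodic P T) (θ : ℝ) :
    ∫ t in 0..T, P (θ - t) = ∫ t in 0..T, P t := by
  have h := hP.intervalIntegral_add_eq (θ - T) 0
  rw [sub_add_cancel, zero_add] at h
  rw [intervalIntegral.integral_comp_sub_left, sub_zero, h]

end Function.Periodic

theorem intervalIntegral_dAlembert {P Q : ℝ → ℝ} {T : ℝ} (hP : Continuous P) (hQ : Continuous Q)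
    (hPT : Periodic P T) (hQT : Periodic Q T) (θ : ℝ) :
    ∫ t in 0..T, (P (θ + t) + Q (θ - t)) / 2 = ((∫ t in 0..T, P t) + ∫ t in 0..T, Q t) / 2 := by
  rw [intervalIntegral.integral_div,
    intervalIntegral.integral_add (Continuous.intervalIntegrable (by fun_prop) _ _)
      (Continuous.intervalIntegrable (by fun_prop) _ _),
    hPT.intervalIntegral_comp_const_add, hQT.intervalIntegral_comp_const_sub]

/-- If `T` is a positive integer multiple of the spatial period `L`, then any `L`-periodic C²
solution of the wave equation with `y(0,·) = f` and `y(T,·) = g` forces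
`g(θ) = f(θ) + (1/L)∫₀ᴸ (g - f)`; i.e. `g - f` is constant. -/
theorem terminal_data_constrained (L T : ℝ) (hL : 0 < L) (hT : 0 < T)
    (hmul : ∃ n : ℕ, 0 < n ∧ T = (n : ℝ) * L)
    (f g : ℝ → ℝ) (y : ℝ → ℝ → ℝ)
    (hy : ContDiffOn ℝ 2 (fun p : ℝ × ℝ => y p.1 p.2) (Set.Icc 0 T ×ˢ Set.univ))
    (hper : ∀ t ∈ Set.Icc (0:ℝ) T, ∀ θ : ℝ, y t (θ + L) = y t θ)
    (hwave : ∀ t ∈ Set.Icc (0:ℝ) T, ∀ θ : ℝ,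
      deriv (deriv (fun s => y s θ)) t - deriv (deriv (fun s => y t s)) θ = 0)
    (hinit : ∀ θ : ℝ, y 0 θ = f θ) (hterm : ∀ θ : ℝ, y T θ = g θ) :
    ∀ θ : ℝ, g θ = f θ + (1 / L) * ∫ x in (0:ℝ)..L, (g x - f x) := by
  obtain ⟨n, -, hTn⟩ := hmul
  set Y : ℝ × ℝ → ℝ := fun p => y p.1 p.2
  have hYstrip : ContDiffOn ℝ 2 Y (Ioo 0 T ×ˢ univ) :=
    hy.mono (prod_mono Ioo_subset_Icc_self subset_rfl)
  have hwave' : ∀ t ∈ Ioo 0 T, ∀ θ,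
      deriv (deriv fun s => Y (s, θ)) t = deriv (deriv fun s => Y (t, s)) θ :=
    fun t ht θ => sub_eq_zero.mp (hwave t (Ioo_subset_Icc_self ht) θ)
  have hmid : T / 2 ∈ Ioo 0 T := ⟨by linarith, by linarith⟩
  have hperiodic (σ : ℝ) : Periodic (riemannInvariant Y (T / 2) σ) T := by
    have h := (periodic_riemannInvariant (Y := Y) (fun t ht => hper t (Ioo_subset_Icc_self ht))
      hmid σ).nat_mul n
    rwa [← hTn] at h
  have hgf (θ : ℝ) : g θ - f θ = ((∫ t in 0..T, riemannInvariant Y (T / 2) 1 t)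
      + ∫ t in 0..T, riemannInvariant Y (T / 2) (-1) t) / 2 := by
    rw [← hterm, ← hinit, ← intervalIntegral_dAlembert (continuous_riemannInvariant hYstrip hmid 1)
      (continuous_riemannInvariant hYstrip hmid (-1)) (hperiodic 1) (hperiodic (-1)) θ]
    exact sub_eq_integral_riemannInvariant hYstrip hwave' hT.le hy.continuousOn hmid θ
  intro θ
  rw [intervalIntegral.integral_congr fun x _ => hgf x, intervalIntegral.integral_const, ← hgf θ]
  field_simp
  ring
end
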